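/- arXiv:1303.5456 — 5 statements merged into one kernel-verified Lean document; each statement's English description precedes it below -/
import Mathlib

section
/- Let G = (V, E) be a weakly connected directed graph whose underlying undirected graph is bipartite, and A an Abelian group. Then the group of balanced functions h : V ∪ 𝔼 → A (satisfying h(ē) = -h(e) and summing to zero, alternating vertex and edge values, along every cycle in 𝔼) is isomorphic to A^(|V|). -/
/-- A directed multigraph: edges with a source and a target vertex. -/
structure Dgraph (V : Type) (E : Type) where
  src : E → V
  tgt : E → V

namespace Dgraph

variable {V E : Type}

/-- The symmetrization of a digraph: each edge together with its formal reversal.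
`Sum.inl e` is the edge `e` itself, `Sum.inr e` is its reversal `ē`. -/
def sym (G : Dgraph V E) : Dgraph V (E ⊕ E) where
  src := Sum.elim G.src G.tgt
  tgt := Sum.elim G.tgt G.src

/-- A cycle: a list of pairwise distinct edges, consecutively incident,
and closed (the target of the last edge is the source of the first).
The empty list is the trivial cycle. -/
def IsCycle (G : Dgraph V E) (l : List E) : Prop :=
  l.Nodup ∧ l.Chain' (fun a b => G.tgt a = G.src b) ∧
    ∀ h : l ≠ [], G.tgt (l.getLast h) = G.src (l.head h)

/-- Adjacency in the underlying undirected graph. -/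
def Adj (G : Dgraph V E) (x y : V) : Prop :=
  ∃ e, (G.src e = x ∧ G.tgt e = y) ∨ (G.src e = y ∧ G.tgt e = x)

/-- Weak connectivity: the underlying undirected graph is connected. -/
def WeaklyConnected (G : Dgraph V E) : Prop :=
  ∀ x y : V, Relation.ReflTransGen G.Adj x y

/-- The underlying undirected graph is bipartite. -/
def Bipartite (G : Dgraph V E) : Prop :=
  ∃ c : V → Bool, ∀ e, c (G.src e) ≠ c (G.tgt e)

variable (A : Type) [AddCommGroup A]

/-- A function on the symmetrized edge set taking opposite values on reversed edges. -/
def Antisym (f : E ⊕ E → A) : Prop :=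
  ∀ e : E, f (Sum.inr e) = - f (Sum.inl e)

/-- A function on edges is balanced if its sum along every cycle is zero. -/
def BalancedE (G : Dgraph V E) (f : E → A) : Prop :=
  ∀ l : List E, G.IsCycle l → (l.map f).sum = 0

/-- A pair of a function `g` on vertices and `f` on edges is balanced if the
alternating sum `g v₁ + f e₁ + ⋯ + g vₙ + f eₙ` along every cycle is zero
(the vertices of a cycle are exactly the sources of its edges). -/
def BalancedVE (G : Dgraph V E) (g : V → A) (f : E → A) : Prop :=
  ∀ l : List E, G.IsCycle l → (l.map (fun e => g (G.src e) + f e)).sum = 0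

variable {A}

lemma sum_map_add (l : List E) (f g : E → A) :
    (l.map (fun e => f e + g e)).sum = (l.map f).sum + (l.map g).sum := by
  induction l with
  | nil => simp
  | cons a t ih => simp only [List.map_cons, List.sum_cons, ih]; abel

lemma sum_map_neg (l : List E) (f : E → A) :
    (l.map (fun e => - f e)).sum = - (l.map f).sum := by
  induction l with
  | nil => simp
  | cons a t ih => simp only [List.map_cons, List.sum_cons, ih]; abel

lemma sum_map_eq_zero (l : List E) (f : E → A) (h : ∀ e, f e = 0) :
    (l.map f).sum = 0 := by
  induction l with
  | nil => simp
  | cons a t ih => simp [h, ih]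

variable (A)

/-- `HF(𝔼, A)`: the group of flexible-balanced functions on the symmetrized edges. -/
def HF (G : Dgraph V E) : AddSubgroup ((E ⊕ E) → A) where
  carrier := {f | Antisym A f ∧ BalancedE A G.sym f}
  zero_mem' :=
    ⟨fun e => by simp, fun l _ => sum_map_eq_zero l _ (fun e => by simp)⟩
  add_mem' := by
    intro f g hf hg
    refine ⟨fun e => ?_, fun l hl => ?_⟩
    · have h1 := hf.1 e; have h2 := hg.1 e
      simp only [Pi.add_apply]
      rw [h1, h2]; abel
    · have hmap : l.map (f + g) = l.map (fun e => f e + g e) := rfl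
      rw [hmap, sum_map_add l f g, hf.2 l hl, hg.2 l hl, add_zero]
  neg_mem' := by
    intro f hf
    refine ⟨fun e => ?_, fun l hl => ?_⟩
    · simp only [Pi.neg_apply]; rw [hf.1 e]
    · have hmap : l.map (-f) = l.map (fun e => - f e) := rfl
      rw [hmap, sum_map_neg l f, hf.2 l hl, neg_zero]

/-- `WF(V ∪ 𝔼, A)`: the group of flexible-balanced functions on vertices and edges,
encoded as pairs (function on vertices, function on symmetrized edges). -/
def WF (G : Dgraph V E) : AddSubgroup ((V → A) × ((E ⊕ E) → A)) where
  carrier := {p | Antisym A p.2 ∧ BalancedVE A G.sym p.1 p.2}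
  zero_mem' :=
    ⟨fun e => by simp, fun l _ => sum_map_eq_zero l _ (fun e => by simp)⟩
  add_mem' := by
    intro p q hp hq
    refine ⟨fun e => ?_, fun l hl => ?_⟩
    · have h1 := hp.1 e; have h2 := hq.1 e
      simp only [Prod.snd_add, Pi.add_apply]
      rw [h1, h2]; abel
    · have h := sum_map_add l (fun e => p.1 (G.sym.src e) + p.2 e)
        (fun e => q.1 (G.sym.src e) + q.2 e)
      simp only [Prod.fst_add, Prod.snd_add, Pi.add_apply]
      have heq : (l.map (fun e => (p.1 (G.sym.src e) + q.1 (G.sym.src e)) + (p.2 e + q.2 e))).sum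
          = (l.map (fun e => (p.1 (G.sym.src e) + p.2 e) + (q.1 (G.sym.src e) + q.2 e))).sum := by
        congr 1; apply List.map_congr_left; intro e _; abel
      rw [heq, h, hp.2 l hl, hq.2 l hl, add_zero]
  neg_mem' := by
    intro p hp
    refine ⟨fun e => ?_, fun l hl => ?_⟩
    · simp only [Prod.snd_neg, Pi.neg_apply]; rw [hp.1 e]
    · have h := sum_map_neg l (fun e => p.1 (G.sym.src e) + p.2 e)
      simp only [Prod.fst_neg, Prod.snd_neg, Pi.neg_apply]
      have heq : (l.map (fun e => -p.1 (G.sym.src e) + -p.2 e)).sum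
          = (l.map (fun e => -(p.1 (G.sym.src e) + p.2 e))).sum := by
        congr 1; apply List.map_congr_left; intro e _; abel
      rw [heq, h, hp.2 l hl, neg_zero]

/-- `BF(V, A)`: the group of flexible-balanceable functions on vertices. -/
def BF (G : Dgraph V E) : AddSubgroup (V → A) where
  carrier := {g | ∃ f : (E ⊕ E) → A, (g, f) ∈ WF A G}
  zero_mem' := ⟨0, (WF A G).zero_mem⟩
  add_mem' := by
    rintro g1 g2 ⟨f1, h1⟩ ⟨f2, h2⟩
    exact ⟨f1 + f2, (WF A G).add_mem h1 h2⟩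
  neg_mem' := by
    rintro g ⟨f, h⟩
    exact ⟨-f, (WF A G).neg_mem h⟩

/-- The subgroup of elements of order dividing 2. -/
def Two : AddSubgroup A where
  carrier := {a | a + a = 0}
  zero_mem' := by simp
  add_mem' := by
    intro a b ha hb
    have h : a + b + (a + b) = (a + a) + (b + b) := by abel
    simp only [Set.mem_setOf_eq] at *
    rw [h, ha, hb, add_zero]
  neg_mem' := by
    intro a ha
    simp only [Set.mem_setOf_eq] at *
    rw [← neg_add]; simp [ha]

/-- `HR(E, A)`: the group of rigid-balanced functions on edges. -/
def HR (G : Dgraph V E) : AddSubgroup (E → A) where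
  carrier := {f | BalancedE A G f}
  zero_mem' := fun l _ => sum_map_eq_zero l _ (fun e => by simp)
  add_mem' := by
    intro f g hf hg l hl
    have hmap : l.map (f + g) = l.map (fun e => f e + g e) := rfl
    rw [hmap, sum_map_add l f g, hf l hl, hg l hl, add_zero]
  neg_mem' := by
    intro f hf l hl
    have hmap : l.map (-f) = l.map (fun e => - f e) := rfl
    rw [hmap, sum_map_neg l f, hf l hl, neg_zero]

/-- `WR(V ∪ E, A)`: the group of rigid-balanced functions on vertices and edges,
encoded as pairs (function on vertices, function on edges). -/
def WR (G : Dgraph V E) : AddSubgroup ((V → A) × (E → A)) where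
  carrier := {p | BalancedVE A G p.1 p.2}
  zero_mem' := fun l _ => sum_map_eq_zero l _ (fun e => by simp)
  add_mem' := by
    intro p q hp hq l hl
    have h := sum_map_add l (fun e => p.1 (G.src e) + p.2 e)
      (fun e => q.1 (G.src e) + q.2 e)
    simp only [Prod.fst_add, Prod.snd_add, Pi.add_apply]
    have heq : (l.map (fun e => (p.1 (G.src e) + q.1 (G.src e)) + (p.2 e + q.2 e))).sum
        = (l.map (fun e => (p.1 (G.src e) + p.2 e) + (q.1 (G.src e) + q.2 e))).sum := by
      congr 1; apply List.map_congr_left; intro e _; abel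
    rw [heq, h, hp l hl, hq l hl, add_zero]
  neg_mem' := by
    intro p hp l hl
    have h := sum_map_neg l (fun e => p.1 (G.src e) + p.2 e)
    simp only [Prod.fst_neg, Prod.snd_neg, Pi.neg_apply]
    have heq : (l.map (fun e => -p.1 (G.src e) + -p.2 e)).sum
        = (l.map (fun e => -(p.1 (G.src e) + p.2 e))).sum := by
      congr 1; apply List.map_congr_left; intro e _; abel
    rw [heq, h, hp l hl, neg_zero]

variable {A}

/-- One-step directed reachability. -/
def Step (G : Dgraph V E) (x y : V) : Prop := ∃ e, G.src e = x ∧ G.tgt e = y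

/-- Directed reachability. -/
def Reach (G : Dgraph V E) : V → V → Prop := Relation.ReflTransGen G.Step

/-- Every vertex is reachable from every other vertex by a directed path. -/
def StronglyConnected (G : Dgraph V E) : Prop := ∀ x y : V, G.Reach x y

/-- Mutual directed reachability as an equivalence (setoid) on vertices;
its classes are the strongly connected components. -/
def scSetoid (G : Dgraph V E) : Setoid V where
  r x y := G.Reach x y ∧ G.Reach y x
  iseqv := ⟨fun _ => ⟨.refl, .refl⟩, fun h => ⟨h.2, h.1⟩,
    fun h1 h2 => ⟨h1.1.trans h2.1, h2.2.trans h1.2⟩⟩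

/-- The number `k̄(G)` of strongly connected components. -/
noncomputable def numSCC (G : Dgraph V E) : ℕ := Nat.card (Quotient G.scSetoid)

/-- The number `r(G)` of edges joining vertices in distinct strongly connected components. -/
noncomputable def numCrossEdges (G : Dgraph V E) : ℕ :=
  Nat.card {e : E // ¬ G.scSetoid.r (G.src e) (G.tgt e)}

/-- A directed path from `x` to `y`: pairwise distinct, consecutively incident edges,
starting at `x` and ending at `y`; the empty path joins each vertex to itself. -/
def IsPathFrom (G : Dgraph V E) (l : List E) (x y : V) : Prop :=
  l.Nodup ∧ l.Chain' (fun a b => G.tgt a = G.src b) ∧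
    ((l = [] ∧ x = y) ∨ ∃ h : l ≠ [], G.src (l.head h) = x ∧ G.tgt (l.getLast h) = y)

/-- Reorientation of the edges: edge `e` keeps its direction iff `o e = true`. -/
def orient (G : Dgraph V E) (o : E → Bool) : Dgraph V E where
  src e := if o e then G.src e else G.tgt e
  tgt e := if o e then G.tgt e else G.src e

/-- The underlying edge of a symmetrized edge. -/
def proj : E ⊕ E → E := Sum.elim id id

/-- A cycle in the underlying *undirected* graph: edges may be traversed in either
direction, and the underlying edges are pairwise distinct. -/
def IsUCycle (G : Dgraph V E) (l : List (E ⊕ E)) : Prop :=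
  (l.map proj).Nodup ∧ l.Chain' (fun a b => G.sym.tgt a = G.sym.src b) ∧
    ∀ h : l ≠ [], G.sym.tgt (l.getLast h) = G.sym.src (l.head h)

variable (A)

/-- A function on the edges of an undirected graph is balanced if its sum along
every undirected cycle (each edge contributing its value regardless of the
traversal direction) is zero. -/
def UBalanced (G : Dgraph V E) (f : E → A) : Prop :=
  ∀ l : List (E ⊕ E), G.IsUCycle l → (l.map (fun ee => f (proj ee))).sum = 0

/-- The subgroup of functions on vertices vanishing at a chosen base vertex. -/
def vanishing (v₀ : V) : AddSubgroup (V → A) where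
  carrier := {g | g v₀ = 0}
  zero_mem' := by simp
  add_mem' := by
    intro a b ha hb
    simp only [Set.mem_setOf_eq, Pi.add_apply] at *
    rw [ha, hb, add_zero]
  neg_mem' := by
    intro a ha
    simp only [Set.mem_setOf_eq, Pi.neg_apply] at *
    rw [ha, neg_zero]

variable {A}

/-- The subgraph induced by a strongly connected component `j`. -/
def compGraph (G : Dgraph V E) (j : Quotient G.scSetoid) :
    Dgraph {v : V // Quotient.mk G.scSetoid v = j}
      {e : E // Quotient.mk G.scSetoid (G.src e) = j ∧ Quotient.mk G.scSetoid (G.tgt e) = j} where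
  src e := ⟨G.src e.1, e.2.1⟩
  tgt e := ⟨G.tgt e.1, e.2.2⟩

end Dgraph

/-!
On the 2-cycle formed by an edge and its reversal the edge values cancel, so the vertex part `g`
of a balanced pair `(g, f)` satisfies `g (src e) + g (tgt e) = 0`; on a connected bipartite graph
`g` is therefore `±a` according to the colour class, for a single `a : A`. The values
`g (src ee) + f ee` are balanced on the symmetrized graph, hence sum to zero along closed walks,
hence are the increments of a potential `φ : V → A`, unique up to an additive constant.
Normalising the potential by `φ v₀ = a` makes `(g, f) ↦ φ` an isomorphism onto `A^V`.
-/

namespace Dgraph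

variable {V E A : Type} [AddCommGroup A]

inductive IsWalk (G : Dgraph V E) : V → V → List E → Prop
  | nil (x : V) : IsWalk G x x []
  | cons {x y z : V} {e : E} {l : List E} (hx : G.src e = x) (hy : G.tgt e = y)
      (hl : IsWalk G y z l) : IsWalk G x z (e :: l)

namespace IsWalk

variable {G : Dgraph V E} {x y z : V} {l l₁ l₂ : List E}

lemma append (h₁ : G.IsWalk x y l₁) (h₂ : G.IsWalk y z l₂) : G.IsWalk x z (l₁ ++ l₂) := by
  induction h₁ with
  | nil => exact h₂
  | cons hx hy _ ih => exact .cons hx hy (ih h₂)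

lemma exists_of_append (h : G.IsWalk x z (l₁ ++ l₂)) :
    ∃ y, G.IsWalk x y l₁ ∧ G.IsWalk y z l₂ := by
  induction l₁ generalizing x with
  | nil => exact ⟨x, .nil x, h⟩
  | cons e l ih =>
    obtain _ | ⟨hx, hy, hl⟩ := h
    obtain ⟨y, h₁, h₂⟩ := ih hl
    exact ⟨y, .cons hx hy h₁, h₂⟩

lemma src_head {e : E} (h : G.IsWalk x y (e :: l)) : G.src e = x := by
  cases h with
  | cons hx _ _ => exact hx

lemma cons_iff {e : E} :
    G.IsWalk x y (e :: l) ↔ (e :: l).IsChain (fun a b => G.tgt a = G.src b) ∧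
      G.src e = x ∧ G.tgt ((e :: l).getLast (List.cons_ne_nil e l)) = y := by
  induction l generalizing e x with
  | nil =>
    constructor
    · rintro (_ | ⟨hx, rfl, ⟨⟩⟩)
      exact ⟨List.isChain_singleton e, hx, rfl⟩
    · rintro ⟨-, hx, hy⟩
      exact .cons hx hy (.nil y)
  | cons f l ih =>
    simp only [List.getLast_cons_cons]
    constructor
    · rintro (_ | ⟨hx, rfl, hl⟩)
      obtain ⟨hch, hf, hy⟩ := ih.1 hl
      exact ⟨List.isChain_cons_cons.2 ⟨hf.symm, hch⟩, hx, hy⟩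
    · rintro ⟨hch, hx, hy⟩
      obtain ⟨hef, hch⟩ := List.isChain_cons_cons.1 hch
      exact .cons hx rfl (ih.2 ⟨hch, hef.symm, hy⟩)

lemma isCycle (h : G.IsWalk x x l) (hl : l.Nodup) : G.IsCycle l := by
  rcases l with _ | ⟨e, l⟩
  · exact ⟨hl, List.isChain_nil, fun h => absurd rfl h⟩
  · obtain ⟨hch, hx, hy⟩ := cons_iff.1 h
    exact ⟨hl, hch, fun _ => hy.trans hx.symm⟩

lemma sum_map_sub (h : G.IsWalk x y l) (φ : V → A) :
    (l.map fun e => φ (G.tgt e) - φ (G.src e)).sum = φ y - φ x := by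
  induction h with
  | nil => simp
  | cons hx hy _ ih =>
    rw [List.map_cons, List.sum_cons, ih, hx, hy]
    abel

end IsWalk

lemma IsCycle.isWalk {G : Dgraph V E} {e : E} {l : List E} (h : G.IsCycle (e :: l)) :
    G.IsWalk (G.src e) (G.src e) (e :: l) :=
  IsWalk.cons_iff.2 ⟨h.2.1, rfl, h.2.2 (List.cons_ne_nil e l)⟩

lemma balancedE_sub (G : Dgraph V E) (φ : V → A) :
    BalancedE A G (fun e => φ (G.tgt e) - φ (G.src e)) := by
  rintro (_ | ⟨e, l⟩) hl
  · rfl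
  · rw [hl.isWalk.sum_map_sub, sub_self]

lemma _root_.List.exists_eq_append_cons_append_cons_of_not_nodup {α : Type} {l : List α}
    (h : ¬ l.Nodup) : ∃ a s p q, l = s ++ a :: (p ++ a :: q) := by
  obtain ⟨a, ha⟩ := List.exists_duplicate_iff_not_nodup.2 h
  obtain ⟨r₁, r₂, rfl, h₁, h₂⟩ := List.cons_sublist_iff.1 (List.duplicate_iff_sublist.1 ha)
  obtain ⟨s, t, rfl⟩ := List.append_of_mem h₁
  obtain ⟨u, q, rfl⟩ := List.append_of_mem (List.singleton_sublist.1 h₂)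
  exact ⟨a, s, t ++ u, q, by simp⟩

/-- A closed walk splits at a repeated edge into two shorter closed walks, so balanced
functions also sum to zero along closed walks that are not cycles. -/
theorem IsWalk.sum_map_eq_zero {G : Dgraph V E} {F : E → A} (hF : BalancedE A G F)
    {x : V} {l : List E} (h : G.IsWalk x x l) : (l.map F).sum = 0 := by
  induction hn : l.length using Nat.strong_induction_on generalizing x l with
  | _ n ih =>
  by_cases hl : l.Nodup
  · exact hF l (h.isCycle hl)
  obtain ⟨a, s, p, q, rfl⟩ := List.exists_eq_append_cons_append_cons_of_not_nodup hl
  obtain ⟨y, hs, hapq⟩ := h.exists_of_append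
  obtain ⟨z, hap, haq⟩ := IsWalk.exists_of_append (l₁ := a :: p) (l₂ := a :: q) hapq
  obtain rfl : z = y := haq.src_head.symm.trans hap.src_head
  have hp := ih _ (by simp [← hn]; omega) hap rfl
  have hq := ih _ (by simp [← hn]; omega) (haq.append hs) rfl
  simp only [List.map_append, List.map_cons, List.sum_append, List.sum_cons] at hp hq ⊢
  calc _ = (F a + (p.map F).sum) + (F a + (q.map F).sum + (s.map F).sum) := by abel
    _ = 0 := by rw [hp, hq, add_zero]

theorem exists_potential_of_balancedE {G : Dgraph V E} {F : E → A} (hF : BalancedE A G F)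
    (hG : ∀ x y, ∃ l, G.IsWalk x y l) (v₀ : V) (a : A) :
    ∃ φ : V → A, φ v₀ = a ∧ ∀ e, F e = φ (G.tgt e) - φ (G.src e) := by
  choose w hw using hG v₀
  refine ⟨fun v => a + ((w v).map F).sum, by simp [(hw v₀).sum_map_eq_zero hF], fun e => ?_⟩
  obtain ⟨l, hl⟩ := hG (G.tgt e) v₀
  have h₁ := ((hw (G.src e)).append ((IsWalk.nil _).cons rfl rfl |>.append hl)).sum_map_eq_zero hF
  have h₂ := ((hw (G.tgt e)).append hl).sum_map_eq_zero hF
  simp only [List.map_append, List.map_cons, List.map_nil, List.sum_append, List.sum_cons,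
    List.sum_nil, add_zero] at h₁ h₂
  calc F e = (((w (G.src e)).map F).sum + (F e + (l.map F).sum))
        - (((w (G.tgt e)).map F).sum + (l.map F).sum)
        + ((w (G.tgt e)).map F).sum - ((w (G.src e)).map F).sum := by abel
    _ = _ := by beta_reduce; rw [h₁, h₂]; abel

namespace WeaklyConnected

variable {G : Dgraph V E}

theorem exists_isWalk_sym (hG : G.WeaklyConnected) (x y : V) : ∃ l, G.sym.IsWalk x y l := by
  induction hG x y with
  | refl => exact ⟨[], .nil x⟩
  | tail _ hadj ih =>
    obtain ⟨l, hl⟩ := ih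
    obtain ⟨e, ⟨hs, ht⟩ | ⟨hs, ht⟩⟩ := hadj
    · exact ⟨l ++ [.inl e], hl.append (.cons (e := Sum.inl e) hs ht (.nil _))⟩
    · exact ⟨l ++ [.inr e], hl.append (.cons (e := Sum.inr e) ht hs (.nil _))⟩

theorem apply_eq_of_forall_src_tgt {β : Type} (hG : G.WeaklyConnected) {φ : V → β}
    (hφ : ∀ e, φ (G.src e) = φ (G.tgt e)) (x y : V) : φ x = φ y := by
  induction hG x y with
  | refl => rfl
  | tail _ hadj ih =>
    obtain ⟨e, ⟨rfl, rfl⟩ | ⟨rfl, rfl⟩⟩ := hadj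
    · exact ih.trans (hφ e)
    · exact ih.trans (hφ e).symm

end WeaklyConnected

def colorSign (c : V → Bool) (v₀ v : V) : ℤ := if c v = c v₀ then 1 else -1

lemma colorSign_self (c : V → Bool) (v₀ : V) : colorSign c v₀ v₀ = 1 := if_pos rfl

lemma colorSign_mul_self (c : V → Bool) (v₀ v : V) : colorSign c v₀ v * colorSign c v₀ v = 1 := by
  unfold colorSign; split <;> rfl

lemma colorSign_of_ne {c : V → Bool} (v₀ : V) {x y : V} (h : c x ≠ c y) :
    colorSign c v₀ y = -colorSign c v₀ x := by
  unfold colorSign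
  cases hx : c x <;> cases hy : c y <;> cases c v₀ <;> simp_all

theorem WeaklyConnected.eq_colorSign_smul {G : Dgraph V E} (hG : G.WeaklyConnected)
    {c : V → Bool} (hc : ∀ e, c (G.src e) ≠ c (G.tgt e)) {g : V → A}
    (hg : ∀ e, g (G.src e) + g (G.tgt e) = 0) (v₀ v : V) : g v = colorSign c v₀ v • g v₀ := by
  have hconst := hG.apply_eq_of_forall_src_tgt (φ := fun v => colorSign c v₀ v • g v) (fun e => by
    rw [colorSign_of_ne v₀ (hc e), eq_neg_of_add_eq_zero_right (hg e), smul_neg, neg_smul, neg_neg])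
  rw [← one_smul ℤ (g v), ← colorSign_mul_self c v₀ v, mul_smul, hconst v v₀, colorSign_self,
    one_smul]

lemma add_eq_zero_of_mem_WF {G : Dgraph V E} {g : V → A} {f : E ⊕ E → A} (h : (g, f) ∈ WF A G)
    (e : E) : g (G.src e) + g (G.tgt e) = 0 := by
  have hcyc : G.sym.IsCycle [.inl e, .inr e] :=
    (IsWalk.cons (e := Sum.inl e) rfl rfl (.cons (e := Sum.inr e) rfl rfl (.nil _))).isCycle
      (by simp)
  have hf : f (.inr e) = -f (.inl e) := h.1 e
  have hsum := h.2 _ hcyc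
  simp only [List.map_cons, List.map_nil, List.sum_cons, List.sum_nil, add_zero, sym,
    Sum.elim_inl, Sum.elim_inr, hf] at hsum
  rw [← hsum]
  abel

variable (A) in
def ofPotential (G : Dgraph V E) {c : V → Bool} (hc : ∀ e, c (G.src e) ≠ c (G.tgt e)) (v₀ : V) :
    (V → A) →+ WF A G where
  toFun φ := ⟨(fun v => colorSign c v₀ v • φ v₀,
      fun ee => φ (G.sym.tgt ee) - φ (G.sym.src ee) - colorSign c v₀ (G.sym.src ee) • φ v₀), by
    refine ⟨fun e => ?_, fun l hl => ?_⟩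
    · simp only [sym, Sum.elim_inl, Sum.elim_inr, colorSign_of_ne v₀ (hc e), neg_smul]
      abel
    · simpa using balancedE_sub G.sym φ l hl⟩
  map_zero' := by ext <;> simp
  map_add' φ ψ := by ext <;> simp; abel

section ofPotential

variable {G : Dgraph V E} (hG : G.WeaklyConnected) {c : V → Bool}
  (hc : ∀ e, c (G.src e) ≠ c (G.tgt e)) (v₀ : V)
include hG

theorem injective_ofPotential : Function.Injective (ofPotential A G hc v₀) := by
  rw [injective_iff_map_eq_zero]
  intro φ hφ
  have hv₀ : φ v₀ = 0 := by
    simpa [ofPotential, colorSign_self] using congrArg (fun p : WF A G => p.1.1 v₀) hφ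
  have hedge (e : E) : φ (G.src e) = φ (G.tgt e) := by
    have := congrArg (fun p : WF A G => p.1.2 (.inl e)) hφ
    simp only [ofPotential, sym, AddMonoidHom.coe_mk, ZeroHom.coe_mk, hv₀, smul_zero, sub_zero,
      Sum.elim_inl, ZeroMemClass.coe_zero, Prod.snd_zero, Pi.zero_apply, sub_eq_zero] at this
    exact this.symm
  funext v
  rw [hG.apply_eq_of_forall_src_tgt hedge v v₀, hv₀, Pi.zero_apply]

theorem surjective_ofPotential : Function.Surjective (ofPotential A G hc v₀) := by
  rintro ⟨⟨g, f⟩, hgf⟩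
  have hg := hG.eq_colorSign_smul hc (add_eq_zero_of_mem_WF hgf) v₀
  obtain ⟨φ, hφv₀, hφ⟩ :=
    exists_potential_of_balancedE hgf.2 hG.exists_isWalk_sym v₀ (g v₀)
  refine ⟨φ, Subtype.ext (Prod.ext (funext fun v => ?_) (funext fun ee => ?_))⟩
  · simp [ofPotential, hφv₀, ← hg]
  · simp [ofPotential, hφv₀, ← hg, ← hφ ee]

end ofPotential

theorem nonempty_WF_addEquiv_pi {G : Dgraph V E} (hG : G.WeaklyConnected) (hB : G.Bipartite) :
    Nonempty (WF A G ≃+ (V → A)) := by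
  obtain ⟨c, hc⟩ := hB
  rcases isEmpty_or_nonempty V with _ | ⟨⟨v₀⟩⟩
  · have : IsEmpty E := ⟨fun e => isEmptyElim (G.src e)⟩
    let := uniqueOfSubsingleton (0 : WF A G)
    exact ⟨AddEquiv.ofUnique⟩
  · exact ⟨(AddEquiv.ofBijective _ ⟨injective_ofPotential hG hc v₀,
      surjective_ofPotential hG hc v₀⟩).symm⟩

end Dgraph

/-- For a finite weakly connected directed graph whose underlying
undirected graph is bipartite, the group `WF(V ∪ 𝔼, A)` of balanced functions on vertices
and symmetrized edges is isomorphic to `A^(|V|)`. -/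
theorem stmt1 (V E : Type) [Fintype V] (A : Type) [AddCommGroup A]
    (G : Dgraph V E) (hG : G.WeaklyConnected) (hB : G.Bipartite) :
    Nonempty (Dgraph.WF A G ≃+ (Fin (Fintype.card V) → A)) := by
  obtain ⟨e⟩ := Dgraph.nonempty_WF_addEquiv_pi (A := A) hG hB
  exact ⟨e.trans (AddEquiv.arrowCongr (Fintype.equivFin V) (AddEquiv.refl A))⟩
end

section
/- Let G = (V, E) be a weakly connected directed graph whose underlying undirected graph is not bipartite, and A an Abelian group. Then the group of balanceable functions g : V → A in the flexible sense is isomorphic to A₂, the subgroup of elements of A of order dividing 2. -/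
/-!
The two-edge cycle `e ē` shows that a balanceable `g` satisfies `g (src e) + g (tgt e) = 0`
on every edge, so along any walk `g` alternates between `a` and `-a`. An odd cycle forces
`a = -a`, and then weak connectivity makes `g` constant. Conversely, a constant `a ∈ A₂` is
balanced by the constant edge function `a`, which is antisymmetric since `-a = a`.
-/

namespace Dgraph

variable {V E A : Type} [AddCommGroup A] {G : Dgraph V E}

lemma sym_isCycle_pair (G : Dgraph V E) (e : E) : G.sym.IsCycle [Sum.inl e, Sum.inr e] :=
  ⟨by simp, .cons_cons rfl (.singleton _), fun _ => by simp [sym]⟩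

lemma src_add_tgt_eq_zero_of_mem_BF {g : V → A} (hg : g ∈ BF A G) (e : E) :
    g (G.src e) + g (G.tgt e) = 0 := by
  obtain ⟨f, hf, hb⟩ := hg
  have h := hb _ (G.sym_isCycle_pair e)
  have hfe : f (Sum.inr e) = -f (Sum.inl e) := hf e
  simp only [List.map_cons, List.map_nil, List.sum_cons, List.sum_nil, add_zero, sym,
    Sum.elim_inl, Sum.elim_inr, hfe] at h
  rw [← h]
  abel

section AlternatingSign

variable {g : V → A} (hg : ∀ e, g (G.src e) + g (G.tgt e) = 0)
include hg

lemma eq_neg_of_adj {x y : V} (h : G.Adj x y) : g y = -g x := by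
  obtain ⟨e, ⟨rfl, rfl⟩ | ⟨rfl, rfl⟩⟩ := h
  · exact eq_neg_of_add_eq_zero_right (hg e)
  · exact eq_neg_of_add_eq_zero_left (hg e)

lemma eq_or_eq_neg_of_reflTransGen {x y : V} (h : Relation.ReflTransGen G.Adj x y) :
    g y = g x ∨ g y = -g x := by
  induction h with
  | refl => exact .inl rfl
  | tail _ hadj ih =>
    rw [eq_neg_of_adj hg hadj]
    rcases ih with h | h <;> simp [h]

lemma add_self_eq_zero_of_not_bipartite (hG : G.WeaklyConnected) (hB : ¬ G.Bipartite) (v : V) :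
    g v + g v = 0 := by
  by_contra hv
  have hne : -g v ≠ g v := fun h => hv (neg_eq_iff_add_eq_zero.mp h)
  classical
  refine hB ⟨fun w => decide (g w = g v), fun e => ?_⟩
  have ht : g (G.tgt e) = -g (G.src e) := eq_neg_of_add_eq_zero_right (hg e)
  rcases eq_or_eq_neg_of_reflTransGen hg (hG v (G.src e)) with hs | hs <;>
    simp [ht, hs, hne]

lemma eq_of_not_bipartite (hG : G.WeaklyConnected) (hB : ¬ G.Bipartite) (v w : V) :
    g v = g w := by
  rcases eq_or_eq_neg_of_reflTransGen hg (hG w v) with h | h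
  · exact h
  · rw [h, neg_eq_iff_add_eq_zero.mpr (add_self_eq_zero_of_not_bipartite hg hG hB w)]

end AlternatingSign

lemma const_mem_BF (G : Dgraph V E) {a : A} (ha : a ∈ Two A) : (fun _ : V => a) ∈ BF A G :=
  ⟨fun _ => a, fun _ => (neg_eq_iff_add_eq_zero.mpr ha).symm,
    fun l _ => sum_map_eq_zero l _ fun _ => ha⟩

end Dgraph

/-- For a weakly connected directed graph whose underlying undirected
graph is not bipartite, the group `BF(V, A)` of flexible-balanceable functions on vertices
is isomorphic to `A₂`, the subgroup of elements of order dividing 2. -/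
theorem stmt6 (V E : Type) (A : Type) [AddCommGroup A]
    (G : Dgraph V E) (hG : G.WeaklyConnected) (hB : ¬ G.Bipartite) :
    Nonempty (Dgraph.BF A G ≃+ Dgraph.Two A) := by
  obtain ⟨v₀⟩ : Nonempty V := by
    by_contra hV
    exact hB ⟨fun _ => true, fun e => (hV ⟨G.src e⟩).elim⟩
  have hg (g : Dgraph.BF A G) := Dgraph.src_add_tgt_eq_zero_of_mem_BF g.2
  exact ⟨{ toFun := fun g => ⟨g.1 v₀, Dgraph.add_self_eq_zero_of_not_bipartite (hg g) hG hB v₀⟩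
           invFun := fun a => ⟨fun _ => a.1, Dgraph.const_mem_BF G a.2⟩
           left_inv := fun g => Subtype.ext <| funext fun v =>
             Dgraph.eq_of_not_bipartite (hg g) hG hB v₀ v
           right_inv := fun _ => rfl
           map_add' := fun _ _ => rfl }⟩
end

section
/- In the flexible setting, the quotient of the group of balanced functions on vertices and edges, WF(V ∪ 𝔼, A), by the subgroup HF(𝔼, A) of balanced functions on edges (extended by zero on vertices), is naturally isomorphic to the group BF(V, A) of balanceable functions on vertices, via restriction to V. -/
namespace Dgraph

variable {V E A : Type} [AddCommGroup A]

lemma zero_prod_mem_WF_iff (G : Dgraph V E) (f : E ⊕ E → A) :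
    ((0, f) : (V → A) × (E ⊕ E → A)) ∈ WF A G ↔ f ∈ HF A G := by
  refine and_congr_right fun _ => forall₂_congr fun l _ => ?_
  simp only [Pi.zero_apply, zero_add]

variable (A) in
def restrictWF (G : Dgraph V E) : WF A G →+ BF A G where
  toFun p := ⟨p.1.1, p.1.2, p.2⟩
  map_zero' := rfl
  map_add' _ _ := rfl

lemma restrictWF_surjective (G : Dgraph V E) : Function.Surjective (restrictWF A G) := by
  rintro ⟨g, f, hf⟩
  exact ⟨⟨(g, f), hf⟩, rfl⟩

lemma ker_restrictWF (G : Dgraph V E) :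
    (restrictWF A G).ker = ((⊥ : AddSubgroup (V → A)).prod (HF A G)).addSubgroupOf (WF A G) := by
  ext ⟨⟨g, f⟩, hgf⟩
  simp only [AddMonoidHom.mem_ker, AddSubgroup.mem_addSubgroupOf, AddSubgroup.mem_prod,
    AddSubgroup.mem_bot]
  constructor
  · intro hg
    obtain rfl : g = 0 := congrArg (fun x : BF A G => (x : V → A)) hg
    exact ⟨rfl, (zero_prod_mem_WF_iff G f).mp hgf⟩
  · rintro ⟨rfl, -⟩
    rfl

end Dgraph

theorem stmt7_general (V E : Type) (A : Type) [AddCommGroup A]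
    (G : Dgraph V E) :
    ∃ φ : (Dgraph.WF A G ⧸
        ((AddSubgroup.prod (⊥ : AddSubgroup (V → A)) (Dgraph.HF A G)).addSubgroupOf
          (Dgraph.WF A G))) ≃+ Dgraph.BF A G,
      ∀ p : Dgraph.WF A G,
        ((φ (QuotientAddGroup.mk p) : Dgraph.BF A G) : V → A) = (p : (V → A) × ((E ⊕ E) → A)).1 :=
  ⟨(QuotientAddGroup.quotientAddEquivOfEq (Dgraph.ker_restrictWF G).symm).trans
      (QuotientAddGroup.quotientKerEquivOfSurjective _ (Dgraph.restrictWF_surjective G)),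
    fun _ => rfl⟩

/-- The quotient of `WF(V ∪ 𝔼, A)` by the subgroup `HF(𝔼, A)` (embedded
as balanced functions vanishing on all vertices) is naturally isomorphic to `BF(V, A)`,
the isomorphism being induced by restriction to the vertices. -/
theorem stmt7 (V E : Type) (A : Type) [AddCommGroup A]
    (G : Dgraph V E) (hG : G.WeaklyConnected) :
    ∃ φ : (Dgraph.WF A G ⧸
        ((AddSubgroup.prod (⊥ : AddSubgroup (V → A)) (Dgraph.HF A G)).addSubgroupOf
          (Dgraph.WF A G))) ≃+ Dgraph.BF A G,
      ∀ p : Dgraph.WF A G,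
        ((φ (QuotientAddGroup.mk p) : Dgraph.BF A G) : V → A) = (p : (V → A) × ((E ⊕ E) → A)).1 :=
  stmt7_general V E A G
end

section
/- Let G be a strongly connected directed graph, let e be an edge from x to y, and let f : E → A be rigid-balanced. Then there exists a directed path P from y to x not containing e, and the sum of the values of f along any such path equals -f(e). -/
/-!
Strong connectivity gives a walk from `y` to `x`, and a shortest such walk is a path that
avoids `e`: cutting it at a repeated edge, or just before an occurrence of `e` (whose source
is `x`), would give a shorter walk. Conversely, a path from `y` to `x` avoiding `e` closes up
with `e` into a cycle, on which `f` sums to zero.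
-/

namespace Dgraph

variable {V E : Type} {G : Dgraph V E}

inductive IsWalk_s12 (G : Dgraph V E) : V → List E → V → Prop
  | nil (x : V) : G.IsWalk_s12 x [] x
  | cons (e : E) {l : List E} {y : V} : G.IsWalk_s12 (G.tgt e) l y → G.IsWalk_s12 (G.src e) (e :: l) y

def IsShortestWalk (G : Dgraph V E) (x : V) (l : List E) (y : V) : Prop :=
  G.IsWalk_s12 x l y ∧ ∀ l', G.IsWalk_s12 x l' y → l.length ≤ l'.length

lemma Reach.exists_isWalk {x y : V} (h : G.Reach x y) : ∃ l, G.IsWalk_s12 x l y := by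
  induction h using Relation.ReflTransGen.head_induction_on with
  | refl => exact ⟨[], .nil y⟩
  | head hstep _ ih =>
    obtain ⟨e, rfl, rfl⟩ := hstep
    obtain ⟨l, hl⟩ := ih
    exact ⟨e :: l, .cons e hl⟩

namespace IsWalk_s12

variable {x y : V}

lemma of_append_cons {l₁ l₂ : List E} {e : E} (h : G.IsWalk_s12 x (l₁ ++ e :: l₂) y) :
    G.IsWalk_s12 x l₁ (G.src e) ∧ G.IsWalk_s12 (G.src e) (e :: l₂) y := by
  induction l₁ generalizing x with
  | nil => cases h; exact ⟨.nil _, .cons e ‹_›⟩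
  | cons a l₁ ih =>
    cases h with
    | cons _ h =>
      obtain ⟨h₁, h₂⟩ := ih h
      exact ⟨.cons a h₁, h₂⟩

lemma src_eq_of_cons {l : List E} {e : E} (h : G.IsWalk_s12 x (e :: l) y) : G.src e = x := by
  cases h; rfl

lemma isChain {l : List E} (h : G.IsWalk_s12 x l y) : l.IsChain (fun a b => G.tgt a = G.src b) := by
  induction h with
  | nil => exact List.isChain_nil
  | cons e h ih =>
    refine List.isChain_cons.mpr ⟨fun b hb => ?_, ih⟩
    obtain ⟨t, rfl⟩ : ∃ t, _ = b :: t := List.head?_eq_some_iff.mp hb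
    exact (src_eq_of_cons h).symm

lemma isPathFrom {l : List E} (h : G.IsWalk_s12 x l y) (hnd : l.Nodup) : G.IsPathFrom l x y := by
  refine ⟨hnd, h.isChain, ?_⟩
  induction h with
  | nil => exact .inl ⟨rfl, rfl⟩
  | cons e h ih =>
    refine .inr ⟨List.cons_ne_nil _ _, rfl, ?_⟩
    rcases ih (List.nodup_cons.mp hnd).2 with ⟨rfl, rfl⟩ | ⟨hne, -, hlast⟩
    · rfl
    · rwa [List.getLast_cons hne]

lemma exists_isShortestWalk {l : List E} (h : G.IsWalk_s12 x l y) :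
    ∃ l', G.IsShortestWalk x l' y := by
  obtain ⟨l', hl', hmin⟩ := (measure List.length).wf.has_min {l | G.IsWalk_s12 x l y} ⟨l, h⟩
  exact ⟨l', hl', fun l'' h'' => not_lt.mp (hmin l'' h'')⟩

end IsWalk_s12

namespace IsShortestWalk

variable {x y : V}

lemma nodup {l : List E} (h : G.IsShortestWalk x l y) : l.Nodup := by
  obtain ⟨hwalk, hmin⟩ := h
  induction l generalizing x with
  | nil => exact List.nodup_nil
  | cons a t ih =>
    cases hwalk with
    | cons _ ht =>
      refine List.nodup_cons.mpr ⟨fun hat => ?_, ih ht fun t' h' => ?_⟩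
      · obtain ⟨s, w, rfl⟩ := List.append_of_mem hat
        have hlen := hmin _ (IsWalk_s12.of_append_cons ht).2
        simp only [List.length_cons, List.length_append] at hlen
        omega
      · simpa using hmin _ (.cons a h')

lemma src_ne {l : List E} {e : E} (h : G.IsShortestWalk x l y) (he : e ∈ l) : G.src e ≠ y := by
  rintro rfl
  obtain ⟨s, t, rfl⟩ := List.append_of_mem he
  have := h.2 s (IsWalk_s12.of_append_cons h.1).1
  simp at this

end IsShortestWalk

lemma isCycle_cons_of_isPathFrom {l : List E} {e : E} (hp : G.IsPathFrom l (G.tgt e) (G.src e))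
    (he : e ∉ l) : G.IsCycle (e :: l) := by
  obtain ⟨hnd, hchain, hends⟩ := hp
  refine ⟨List.nodup_cons.mpr ⟨he, hnd⟩, List.isChain_cons.mpr ⟨fun b hb => ?_, hchain⟩, fun _ => ?_⟩
  · rcases hends with ⟨rfl, -⟩ | ⟨hne, hhead, -⟩
    · simp at hb
    · rw [List.head?_eq_some_head hne, Option.mem_some_iff] at hb
      exact hb ▸ hhead.symm
  · rcases hends with ⟨rfl, hxy⟩ | ⟨hne, -, hlast⟩
    · simpa using hxy
    · simpa [List.getLast_cons hne] using hlast

lemma BalancedE.sum_map_eq_neg {A : Type} [AddCommGroup A] {f : E → A} (hf : BalancedE A G f)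
    {l : List E} {e : E} (hp : G.IsPathFrom l (G.tgt e) (G.src e)) (he : e ∉ l) :
    (l.map f).sum = - f e := by
  have := hf _ (isCycle_cons_of_isPathFrom hp he)
  rw [List.map_cons, List.sum_cons] at this
  exact eq_neg_of_add_eq_zero_right this

end Dgraph

theorem stmt12_general (V E : Type) (A : Type) [AddCommGroup A]
    (G : Dgraph V E) (hG : G.StronglyConnected)
    (f : E → A) (hf : Dgraph.BalancedE A G f) (e : E) :
    (∃ l : List E, G.IsPathFrom l (G.tgt e) (G.src e) ∧ e ∉ l) ∧
    (∀ l : List E, G.IsPathFrom l (G.tgt e) (G.src e) → e ∉ l → (l.map f).sum = - f e) := by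
  obtain ⟨l₀, hl₀⟩ := (hG (G.tgt e) (G.src e)).exists_isWalk
  obtain ⟨l, hl⟩ := hl₀.exists_isShortestWalk
  exact ⟨⟨l, hl.1.isPathFrom hl.nodup, fun he => hl.src_ne he rfl⟩,
    fun _ hp he => hf.sum_map_eq_neg hp he⟩

/-- Let `G` be a finite strongly connected directed graph, `e` an edge
from `x` to `y`, and `f` a rigid-balanced function on edges. Then there is a directed path
from `y` to `x` not containing `e`, and the sum of `f` along any such path is `-f(e)`. -/
theorem stmt12 (V E : Type) [Fintype V] [Fintype E] (A : Type) [AddCommGroup A]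
    (G : Dgraph V E) (hG : G.StronglyConnected)
    (f : E → A) (hf : Dgraph.BalancedE A G f) (e : E) :
    (∃ l : List E, G.IsPathFrom l (G.tgt e) (G.src e) ∧ e ∉ l) ∧
    (∀ l : List E, G.IsPathFrom l (G.tgt e) (G.src e) → e ∉ l → (l.map f).sum = - f e) :=
  stmt12_general V E A G hG f hf e
end

section
/- Let G be a finite connected undirected graph and A an Abelian group. Viewing the group H(E, A) of balanced A-valued functions on the edges of G and, for each orientation G_dir of G, the group HR(E(G_dir), A) of rigid-balanced functions, all as subgroups of A^(|E|), one has H(E, A) = ⋂ HR(E(G_dir), A), the intersection over all 2^(|E|) orientations of G. -/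
namespace Dgraph

variable {V E E' : Type}

def IsClosedWalk (G : Dgraph V E) (l : List E) : Prop :=
  l.IsChain (fun a b => G.tgt a = G.src b) ∧
    ∀ h : l ≠ [], G.tgt (l.getLast h) = G.src (l.head h)

theorem isCycle_iff (G : Dgraph V E) (l : List E) :
    G.IsCycle l ↔ l.Nodup ∧ G.IsClosedWalk l :=
  Iff.rfl

theorem isUCycle_iff (G : Dgraph V E) (l : List (E ⊕ E)) :
    G.IsUCycle l ↔ (l.map proj).Nodup ∧ G.sym.IsClosedWalk l :=
  Iff.rfl

theorem IsClosedWalk.map {G : Dgraph V E} {H : Dgraph V E'} {φ : E → E'} {l : List E}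
    (hφ : ∀ e ∈ l, H.src (φ e) = G.src e ∧ H.tgt (φ e) = G.tgt e)
    (hl : G.IsClosedWalk l) : H.IsClosedWalk (l.map φ) := by
  obtain ⟨hchain, hclosed⟩ := hl
  refine ⟨(List.isChain_map φ).2 (hchain.imp_of_mem_imp fun a b ha hb hab => ?_), fun h => ?_⟩
  · rw [(hφ a ha).2, (hφ b hb).1, hab]
  · have hne : l ≠ [] := by simpa using h
    rw [List.getLast_map, List.head_map, (hφ _ (List.getLast_mem hne)).2,
      (hφ _ (List.head_mem hne)).1, hclosed hne]

def orientEmb (o : E → Bool) (e : E) : E ⊕ E :=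
  if o e then Sum.inl e else Sum.inr e

@[simp]
theorem proj_orientEmb (o : E → Bool) (e : E) : proj (orientEmb o e) = e := by
  unfold orientEmb; split <;> rfl

theorem sym_orientEmb (G : Dgraph V E) (o : E → Bool) (e : E) :
    G.sym.src (orientEmb o e) = (G.orient o).src e ∧
      G.sym.tgt (orientEmb o e) = (G.orient o).tgt e := by
  unfold orientEmb orient; split <;> simp_all [sym]

theorem IsCycle.isUCycle_map_orientEmb {G : Dgraph V E} {o : E → Bool} {l : List E}
    (hl : (G.orient o).IsCycle l) : G.IsUCycle (l.map (orientEmb o)) := by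
  obtain ⟨hnodup, hwalk⟩ := ((G.orient o).isCycle_iff l).1 hl
  refine ⟨by simpa [Function.comp_def] using hnodup, hwalk.map fun e _ => ?_⟩
  exact sym_orientEmb G o e

open Classical in
/-- The orientation in which the undirected cycle `l` becomes a directed cycle. -/
noncomputable def orientAlong (l : List (E ⊕ E)) : E → Bool :=
  fun e => decide (Sum.inr e ∉ l)

theorem orient_orientAlong {G : Dgraph V E} {l : List (E ⊕ E)} (hl : (l.map proj).Nodup)
    {ee : E ⊕ E} (hee : ee ∈ l) :
    (G.orient (orientAlong l)).src (proj ee) = G.sym.src ee ∧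
      (G.orient (orientAlong l)).tgt (proj ee) = G.sym.tgt ee := by
  rcases ee with e | e
  · -- `l` cannot traverse `e` in both directions, its underlying edges being distinct.
    have hback : Sum.inr e ∉ l := fun hmem => by
      simpa using List.inj_on_of_nodup_map hl hee hmem rfl
    simp [orient, orientAlong, proj, sym, hback]
  · simp [orient, orientAlong, proj, sym, hee]

theorem IsUCycle.isCycle_orientAlong {G : Dgraph V E} {l : List (E ⊕ E)} (hl : G.IsUCycle l) :
    (G.orient (orientAlong l)).IsCycle (l.map proj) := by
  obtain ⟨hnodup, hwalk⟩ := (isUCycle_iff G l).1 hl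
  exact ⟨hnodup, hwalk.map fun _ hee => orient_orientAlong hnodup hee⟩

end Dgraph

theorem stmt13_general (V E : Type) (A : Type) [AddCommGroup A]
    (G : Dgraph V E) (f : E → A) :
    Dgraph.UBalanced A G f ↔ ∀ o : E → Bool, Dgraph.BalancedE A (G.orient o) f := by
  constructor
  · intro hf o l hl
    simpa [Function.comp_def] using hf _ hl.isUCycle_map_orientEmb
  · intro hf l hl
    simpa [Function.comp_def] using hf _ _ hl.isCycle_orientAlong

/-- For a finite connected undirected graph `G`, a function on the edges
is balanced (its sum along every undirected cycle vanishes) if and only if it is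
rigid-balanced for every orientation of `G`; i.e. `H(E, A) = ⋂ HR(E(G_dir), A)`, the
intersection over all `2^(|E|)` orientations. -/
theorem stmt13 (V E : Type) [Fintype V] [Fintype E] (A : Type) [AddCommGroup A]
    (G : Dgraph V E) (hG : G.WeaklyConnected) (f : E → A) :
    Dgraph.UBalanced A G f ↔ ∀ o : E → Bool, Dgraph.BalancedE A (G.orient o) f :=
  stmt13_general V E A G f
end
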